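/- arXiv:2311.11352 — 3 statements merged into one kernel-verified Lean document; each statement's English description precedes it below -/
import Mathlib

section
/- Probability generating function of the Bell distribution: for every θ > 0 and every real s with |s| ≤ 1, ∑_{z=0}^∞ s^z p_θ(z) = exp(e^{sθ} − e^θ). -/
/-!
Writing `B_z = e⁻¹ ∑_k k^z / k!`, the series `∑_z t^z B_z / z!` is `e⁻¹` times the double series
`∑_{k,z} (t k)^z / (k! z!)`, which converges absolutely since its absolute values form the same
series at `|t|`. Summing over `z` first gives `∑_k e^{t k} / k! = exp (e^t)`, so the exponential
generating function of the Bell numbers is `exp (e^t - 1)`. The generating function of `Bell(θ)`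
is `exp (1 - e^θ)` times its value at `t = s θ`.
-/

open Real

/-- The `z`-th Bell number given by Dobinski's formula (with `0^0 = 1`). -/
noncomputable def bellDobinski (z : ℕ) : ℝ :=
  (Real.exp 1)⁻¹ * ∑' k : ℕ, (k : ℝ) ^ z / (Nat.factorial k : ℝ)

/-- The probability mass function of the Bell distribution with parameter `θ`:
`p_θ(z) = θ^z e^{1 - e^θ} B_z / z!`. -/
noncomputable def bellPMF (θ : ℝ) (z : ℕ) : ℝ :=
  θ ^ z * Real.exp (1 - Real.exp θ) * bellDobinski z / (Nat.factorial z : ℝ)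

open Nat

theorem Real.hasSum_pow_div_factorial (x : ℝ) : HasSum (fun n : ℕ => x ^ n / n !) (exp x) := by
  rw [exp_eq_exp_ℝ]
  exact NormedSpace.expSeries_div_hasSum_exp x

theorem Real.hasSum_exp_mul_div_factorial (x : ℝ) :
    HasSum (fun k : ℕ => exp (x * k) / k !) (exp (exp x)) := by
  simpa only [← exp_nat_mul, mul_comm (_ : ℝ) x] using hasSum_pow_div_factorial (exp x)

noncomputable def dobinskiTerm (t : ℝ) (p : ℕ × ℕ) : ℝ :=
  (t * p.1) ^ p.2 / (p.1 ! * p.2 !)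

theorem dobinskiTerm_eq_inv_factorial_mul (t : ℝ) (k z : ℕ) :
    dobinskiTerm t (k, z) = (k ! : ℝ)⁻¹ * ((t * k) ^ z / z !) := by
  rw [dobinskiTerm, mul_comm (k ! : ℝ), ← div_div, div_eq_inv_mul]

theorem hasSum_dobinskiTerm_fst_fiber (t : ℝ) (k : ℕ) :
    HasSum (fun z => dobinskiTerm t (k, z)) (exp (t * k) / k !) := by
  simpa only [dobinskiTerm_eq_inv_factorial_mul, div_eq_inv_mul _ (k ! : ℝ)]
    using (hasSum_pow_div_factorial (t * k)).mul_left (k ! : ℝ)⁻¹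

theorem norm_dobinskiTerm (t : ℝ) (p : ℕ × ℕ) : ‖dobinskiTerm t p‖ = dobinskiTerm |t| p := by
  simp [dobinskiTerm]

theorem summable_dobinskiTerm (t : ℝ) : Summable (dobinskiTerm t) := by
  refine Summable.of_norm ?_
  simp only [norm_dobinskiTerm]
  refine (summable_prod_of_nonneg fun p => by unfold dobinskiTerm; positivity).2
    ⟨fun k => (hasSum_dobinskiTerm_fst_fiber |t| k).summable, ?_⟩
  simpa only [(hasSum_dobinskiTerm_fst_fiber |t| _).tsum_eq]
    using (hasSum_exp_mul_div_factorial |t|).summable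

theorem hasSum_dobinskiTerm (t : ℝ) : HasSum (dobinskiTerm t) (exp (exp t)) :=
  (hasSum_exp_mul_div_factorial t).unique ((summable_dobinskiTerm t).hasSum.prod_fiberwise
    (hasSum_dobinskiTerm_fst_fiber t)) ▸ (summable_dobinskiTerm t).hasSum

theorem tsum_dobinskiTerm_snd_fiber (t : ℝ) (z : ℕ) :
    ∑' k, dobinskiTerm t (k, z) = exp 1 * (t ^ z * bellDobinski z / z !) := by
  have hterm : ∀ k : ℕ, dobinskiTerm t (k, z) = t ^ z / z ! * ((k : ℝ) ^ z / k !) := by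
    intro k
    rw [dobinskiTerm, mul_pow]
    field_simp
  simp only [hterm, tsum_mul_left, bellDobinski]
  field_simp

theorem hasSum_pow_mul_bellDobinski_div_factorial (t : ℝ) :
    HasSum (fun z => t ^ z * bellDobinski z / z !) (exp (exp t - 1)) := by
  have hswap : HasSum (fun p : ℕ × ℕ => dobinskiTerm t p.swap) (exp (exp t)) :=
    (Equiv.prodComm ℕ ℕ).hasSum_iff.2 (hasSum_dobinskiTerm t)
  have h := hswap.prod_fiberwise fun z =>
    ((summable_dobinskiTerm t).prod_symm.prod_factor z).hasSum
  simp only [Prod.swap_prod_mk, tsum_dobinskiTerm_snd_fiber] at h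
  rwa [← hasSum_mul_left_iff (exp_pos 1).ne', ← exp_add, add_sub_cancel]

theorem pow_mul_bellPMF (θ s : ℝ) (z : ℕ) :
    s ^ z * bellPMF θ z = exp (1 - exp θ) * ((s * θ) ^ z * bellDobinski z / z !) := by
  rw [bellPMF, mul_pow]
  ring

theorem bellPMF_pgf_general (θ : ℝ) (s : ℝ) :
    HasSum (fun z : ℕ => s ^ z * bellPMF θ z)
      (Real.exp (Real.exp (s * θ) - Real.exp θ)) := by
  have hexp : exp (exp (s * θ) - exp θ) = exp (1 - exp θ) * exp (exp (s * θ) - 1) := by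
    rw [← exp_add]
    ring_nf
  rw [funext (pow_mul_bellPMF θ s), hexp]
  exact (hasSum_pow_mul_bellDobinski_div_factorial (s * θ)).mul_left _

/-- Probability generating function of the Bell distribution: for every `θ > 0` and every
real `s` with `|s| ≤ 1`, `∑_{z=0}^∞ s^z p_θ(z) = exp (e^{sθ} - e^θ)`. -/
theorem bellPMF_pgf (θ : ℝ) (hθ : 0 < θ) (s : ℝ) (hs : |s| ≤ 1) :
    HasSum (fun z : ℕ => s ^ z * bellPMF θ z)
      (Real.exp (Real.exp (s * θ) - Real.exp θ)) :=
  bellPMF_pgf_general θ s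
end

section
/- Mean of the Bell distribution: for every θ > 0, ∑_{z=0}^∞ z · p_θ(z) = θ e^θ (in particular the series converges). -/
open Real

/-!
Inserting Dobinski's formula, `z p_θ(z) = e^{-e^θ} ∑_k z (kθ)^z / (z! k!)`. This double series is
absolutely summable, so it may be summed over `z` first, which gives
`∑_k kθ e^{kθ} / k! = θ ∑_k k (e^θ)^k / k! = θ e^θ e^{e^θ}`, using `∑_n n x^n / n! = x e^x` twice.
-/

lemma hasSum_natCast_mul_pow_div_factorial (x : ℝ) :
    HasSum (fun n : ℕ => (n : ℝ) * x ^ n / n.factorial) (x * exp x) := by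
  have hexp : HasSum (fun n : ℕ => x * (x ^ n / n.factorial)) (x * exp x) := by
    rw [exp_eq_exp_ℝ]
    exact (NormedSpace.expSeries_div_hasSum_exp x).mul_left x
  have hshift : (fun n : ℕ => x * (x ^ n / n.factorial))
      = fun n : ℕ => ((n + 1 : ℕ) : ℝ) * x ^ (n + 1) / (n + 1).factorial := by
    funext n
    rw [Nat.factorial_succ, pow_succ]
    push_cast
    field_simp
  rw [hshift] at hexp
  exact (hasSum_nat_add_iff' 1).mp (by simpa using hexp)

noncomputable def bellMeanTerm (θ : ℝ) (k z : ℕ) : ℝ :=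
  (z : ℝ) * (k * θ) ^ z / z.factorial / k.factorial

lemma hasSum_bellMeanTerm_right (θ : ℝ) (k : ℕ) :
    HasSum (bellMeanTerm θ k) (k * θ * exp (k * θ) / k.factorial) :=
  (hasSum_natCast_mul_pow_div_factorial (k * θ)).div_const _

lemma hasSum_tsum_bellMeanTerm (θ : ℝ) :
    HasSum (fun k => ∑' z, bellMeanTerm θ k z) (θ * (exp θ * exp (exp θ))) := by
  have hterm : ∀ k : ℕ, ∑' z, bellMeanTerm θ k z = θ * (k * exp θ ^ k / k.factorial) := fun k => by
    rw [(hasSum_bellMeanTerm_right θ k).tsum_eq, ← exp_nat_mul]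
    ring
  simp_rw [hterm]
  exact (hasSum_natCast_mul_pow_div_factorial (exp θ)).mul_left θ

lemma norm_bellMeanTerm (θ : ℝ) (k z : ℕ) : ‖bellMeanTerm θ k z‖ = bellMeanTerm |θ| k z := by
  simp only [bellMeanTerm, norm_mul, norm_div, norm_pow, Real.norm_eq_abs, Nat.abs_cast]

lemma summable_bellMeanTerm (θ : ℝ) : Summable (Function.uncurry (bellMeanTerm θ)) := by
  refine .of_norm ?_
  simp only [Function.uncurry_def, norm_bellMeanTerm]
  have hnonneg : 0 ≤ Function.uncurry (bellMeanTerm |θ|) := fun p => by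
    unfold Function.uncurry bellMeanTerm
    positivity
  exact (summable_prod_of_nonneg hnonneg).mpr
    ⟨fun k => (hasSum_bellMeanTerm_right |θ| k).summable, (hasSum_tsum_bellMeanTerm |θ|).summable⟩

lemma exp_neg_exp_mul_tsum_bellMeanTerm (θ : ℝ) (z : ℕ) :
    exp (-exp θ) * ∑' k, bellMeanTerm θ k z = z * bellPMF θ z := by
  have hterm : ∀ k : ℕ, bellMeanTerm θ k z
      = z * θ ^ z / z.factorial * ((k : ℝ) ^ z / k.factorial) := fun k => by
    rw [bellMeanTerm, mul_pow]
    ring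
  have hexp : exp (1 - exp θ) = exp (-exp θ) * exp 1 := by
    rw [← exp_add]
    ring_nf
  simp_rw [hterm, tsum_mul_left, bellPMF, bellDobinski, hexp]
  field_simp

theorem bellPMF_mean_general (θ : ℝ) :
    HasSum (fun z : ℕ => (z : ℝ) * bellPMF θ z) (θ * Real.exp θ) := by
  have hsum := summable_bellMeanTerm θ
  have hswap : HasSum (fun z => ∑' k, bellMeanTerm θ k z) (∑' k, ∑' z, bellMeanTerm θ k z) := by
    rw [← hsum.tsum_comm]
    exact hsum.prod_symm.prod.hasSum
  rw [(hasSum_tsum_bellMeanTerm θ).tsum_eq] at hswap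
  have hmean := hswap.mul_left (exp (-exp θ))
  have hcancel : exp (-exp θ) * (θ * (exp θ * exp (exp θ))) = θ * exp θ := by
    have h : exp (-exp θ) * exp (exp θ) = 1 := by rw [← exp_add, neg_add_cancel, exp_zero]
    linear_combination θ * exp θ * h
  simpa only [exp_neg_exp_mul_tsum_bellMeanTerm, hcancel] using hmean

/-- Mean of the Bell distribution: for every `θ > 0`, `∑_{z=0}^∞ z ⬝ p_θ(z) = θ e^θ`
(in particular the series converges). -/
theorem bellPMF_mean (θ : ℝ) (hθ : 0 < θ) :
    HasSum (fun z : ℕ => (z : ℝ) * bellPMF θ z) (θ * Real.exp θ) :=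
  bellPMF_mean_general θ
end

section
/- Compound Poisson representation of the Bell distribution: for θ > 0, let μ := e^θ − 1 and let q be the zero-truncated Poisson(θ) mass function on ℕ, q(y) := θ^y / (y! (e^θ − 1)) for y ≥ 1 and q(0) := 0. Then for every z ∈ ℕ, ∑_{n=0}^∞ (e^{-μ} μ^n / n!) · q^{*n}(z) = p_θ(z), where q^{*n} denotes the n-fold convolution of q (with q^{*0} the point mass at 0). Equivalently, if N ~ Poisson(e^θ − 1) and Y_1, Y_2, … are i.i.d. zero-truncated Poisson(θ) independent of N, then Y_1 + ⋯ + Y_N ~ Bell(θ). -/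
open Real

/-- Convolution of two mass functions on `ℕ`: `(f * g)(z) = ∑_{y=0}^{z} f(y) g(z - y)`. -/
def conv (f g : ℕ → ℝ) : ℕ → ℝ :=
  fun z => ∑ y ∈ Finset.range (z + 1), f y * g (z - y)

/-- `n`-fold convolution of a mass function on `ℕ`, with `f^{*0}` the point mass at `0`. -/
def convPow (f : ℕ → ℝ) : ℕ → ℕ → ℝ
  | 0 => fun z => if z = 0 then 1 else 0
  | n + 1 => conv f (convPow f n)

/-- The zero-truncated Poisson(θ) mass function: `q(y) = θ^y / (y! (e^θ - 1))` for `y ≥ 1`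
and `q(0) = 0`. -/
noncomputable def ztPoisson (θ : ℝ) : ℕ → ℝ :=
  fun y => if y = 0 then 0 else θ ^ y / ((Nat.factorial y : ℝ) * (Real.exp θ - 1))

/-!
Convolution is multiplication of generating series, and `(e^θ - 1) q` has generating series
`e^{θX} - 1`. Hence `μⁿ q^{*n}(z)` is the `z`-th coefficient of `(e^{θX} - 1)ⁿ`, which the binomial
theorem evaluates to `θ^z / z! ∑ⱼ (-1)^{n-j} C(n,j) j^z`. After multiplying by `e^{-μ} / n!`, the
series over `n` is the Cauchy product of `∑ⱼ j^z / j!` with `∑ₘ (-1)^m / m! = e^{-1}`, i.e.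
Dobinski's formula for `B_z`.
-/

open Finset PowerSeries
open scoped Nat

theorem mk_conv (f g : ℕ → ℝ) : mk (conv f g) = mk f * mk g := by
  ext z
  rw [coeff_mk, coeff_mul, Nat.sum_antidiagonal_eq_sum_range_succ_mk]
  simp only [conv, coeff_mk]

theorem mk_convPow (f : ℕ → ℝ) (n : ℕ) : mk (convPow f n) = mk f ^ n := by
  induction n with
  | zero => ext z; simp [convPow, coeff_one]
  | succ n ih => rw [convPow, mk_conv, ih, pow_succ']

theorem coeff_rescale_exp_sub_one_pow {K : Type*} [Field K] [CharZero K] (a : K) (n z : ℕ) :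
    coeff z ((rescale a (PowerSeries.exp K) - 1) ^ n) =
      a ^ z / z ! * ∑ j ∈ range (n + 1), (-1) ^ (n - j) * (n.choose j : K) * (j : K) ^ z := by
  rw [sub_eq_add_neg, add_pow, map_sum, mul_sum]
  refine sum_congr rfl fun j _ => ?_
  have hC : (-1) ^ (n - j) * (n.choose j : K⟦X⟧) = C ((-1) ^ (n - j) * (n.choose j : K)) := by simp
  rw [← map_pow, exp_pow_eq_rescale_exp, rescale_rescale, mul_assoc, hC, coeff_mul_C,
    coeff_rescale, coeff_exp, mul_pow]
  simp only [one_div, map_inv₀, map_natCast]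
  ring

theorem C_mul_mk_ztPoisson (θ : ℝ) :
    C (Real.exp θ - 1) * mk (ztPoisson θ) = rescale θ (PowerSeries.exp ℝ) - 1 := by
  ext y
  rw [coeff_C_mul, coeff_mk, map_sub, coeff_rescale, coeff_exp, coeff_one]
  rcases eq_or_ne y 0 with rfl | hy
  · simp [ztPoisson]
  rcases eq_or_ne θ 0 with rfl | hθ
  · simp [ztPoisson, hy]
  have hμ : Real.exp θ - 1 ≠ 0 := sub_ne_zero.2 ((Real.exp_eq_one_iff θ).not.2 hθ)
  simp only [ztPoisson, if_neg hy, one_div, map_inv₀, map_natCast, sub_zero]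
  field_simp

theorem summable_natCast_pow_div_factorial (z : ℕ) : Summable fun j : ℕ => (j : ℝ) ^ z / j ! := by
  refine .of_nonneg_of_le (fun j => by positivity) (fun j => ?_)
    ((Real.summable_pow_div_factorial (Real.exp 1)).mul_left (z ! : ℝ))
  have hj : (j : ℝ) ^ z ≤ z ! * Real.exp j :=
    (div_le_iff₀' (by positivity)).1 (Real.pow_div_factorial_le_exp _ (Nat.cast_nonneg j) z)
  rw [Real.exp_one_pow, mul_div_assoc']
  gcongr

/-- The summand is the Stirling number `S(z, n)`, so this is `B_z = ∑ₙ S(z, n)`. -/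
theorem hasSum_bellDobinski (z : ℕ) :
    HasSum
      (fun n : ℕ => (∑ j ∈ range (n + 1), (-1) ^ (n - j) * (n.choose j : ℝ) * (j : ℝ) ^ z) / n !)
      (bellDobinski z) := by
  have hf : Summable fun j : ℕ => ‖(j : ℝ) ^ z / (j ! : ℝ)‖ := by
    simpa only [norm_div, norm_pow, RCLike.norm_natCast] using summable_natCast_pow_div_factorial z
  have hg : Summable fun m : ℕ => ‖(-1 : ℝ) ^ m / (m ! : ℝ)‖ := by
    simpa [norm_div, norm_pow] using Real.summable_pow_div_factorial 1
  have hexp : ∑' m : ℕ, (-1 : ℝ) ^ m / m ! = Real.exp (-1) := by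
    rw [Real.exp_eq_exp_ℝ]
    exact (NormedSpace.expSeries_div_hasSum_exp _).tsum_eq
  have hprod : (∑' j : ℕ, (j : ℝ) ^ z / j !) * ∑' m : ℕ, (-1 : ℝ) ^ m / m ! = bellDobinski z := by
    rw [hexp, bellDobinski, Real.exp_neg]
    ring
  refine hprod ▸ (hasSum_sum_range_mul_of_summable_norm hf hg).congr_fun fun n => ?_
  rw [sum_div]
  refine sum_congr rfl fun j hj => ?_
  rw [Nat.cast_choose ℝ (mem_range_succ_iff.1 hj)]
  field_simp

theorem bell_compound_poisson_general (θ : ℝ) (z : ℕ) :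
    HasSum
      (fun n : ℕ =>
        Real.exp (-(Real.exp θ - 1)) * (Real.exp θ - 1) ^ n / (Nat.factorial n : ℝ) *
          convPow (ztPoisson θ) n z)
      (bellPMF θ z) := by
  set μ := Real.exp θ - 1
  have hcoeff (n : ℕ) : μ ^ n * convPow (ztPoisson θ) n z =
      θ ^ z / z ! * ∑ j ∈ range (n + 1), (-1) ^ (n - j) * (n.choose j : ℝ) * (j : ℝ) ^ z := by
    rw [← coeff_rescale_exp_sub_one_pow, ← C_mul_mk_ztPoisson, mul_pow, ← map_pow, coeff_C_mul,
      ← mk_convPow, coeff_mk]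
  have hval : Real.exp (-μ) * θ ^ z / z ! * bellDobinski z = bellPMF θ z := by
    rw [bellPMF, show -μ = 1 - Real.exp θ by ring]
    ring
  refine hval ▸ ((hasSum_bellDobinski z).mul_left _).congr_fun fun n => ?_
  linear_combination Real.exp (-μ) / n ! * hcoeff n

/-- Compound Poisson representation of the Bell distribution: for `θ > 0`, with
`μ = e^θ - 1`, for every `z ∈ ℕ`,
`∑_{n=0}^∞ (e^{-μ} μ^n / n!) ⬝ q^{*n}(z) = p_θ(z)`, where `q` is the zero-truncated
Poisson(θ) mass function. Equivalently, if `N ~ Poisson(e^θ - 1)` and `Y₁, Y₂, …` are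
i.i.d. zero-truncated Poisson(θ) independent of `N`, then `Y₁ + ⋯ + Y_N ~ Bell(θ)`. -/
theorem bell_compound_poisson (θ : ℝ) (hθ : 0 < θ) (z : ℕ) :
    HasSum
      (fun n : ℕ =>
        Real.exp (-(Real.exp θ - 1)) * (Real.exp θ - 1) ^ n / (Nat.factorial n : ℝ) *
          convPow (ztPoisson θ) n z)
      (bellPMF θ z) :=
  bell_compound_poisson_general θ z
end
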